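/- For every t with 0 ≤ t < 1/6, the derivative of z₀ satisfies z₀′(t) = −(5·d(t)·z₀(t))/(q(t)·c(t)) − (9·a(t)·z₂(t)·z₀(t))/(q(t)·c(t)) − (3·y(t)·z₀(t))/q(t). -/

import Mathlib

noncomputable def pFun (t : ℝ) : ℝ := 1 - 6 * t

noncomputable def rFun (s t : ℝ) : ℝ := Real.exp (-(7776 / 25) * (1 - s) ^ 2 * t ^ 3)

noncomputable def qFun (t : ℝ) : ℝ := pFun t ^ 3 / 6

noncomputable def yFun (t : ℝ) : ℝ := pFun t ^ 2

noncomputable def aFun (s t : ℝ) : ℝ := (5 / 6) * s * (1 - s) ^ 2 * pFun t ^ 5 * rFun s t ^ 2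

noncomputable def c1Fun (s t : ℝ) : ℝ := (5 / 6) * s * (1 - s) * pFun t ^ 2 * rFun s t

noncomputable def c2Fun (s t : ℝ) : ℝ := (5 / 6) * (1 - s) ^ 2 * pFun t ^ 3 * rFun s t ^ 2

noncomputable def cFun (s t : ℝ) : ℝ := c1Fun s t * c2Fun s t

noncomputable def dFun (s t : ℝ) : ℝ := (5 / 6) * s * (1 - s) ^ 3 * pFun t ^ 7 * rFun s t ^ 3

noncomputable def z0Fun (s t : ℝ) : ℝ := (5 / 6) * (1 - s) ^ 5 * pFun t ^ 9 * rFun s t ^ 3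

noncomputable def z1Fun (s t : ℝ) : ℝ := (1 - s) ^ 4 * (1 - pFun t) * pFun t ^ 6 * rFun s t ^ 2

noncomputable def z2Fun (s t : ℝ) : ℝ :=
  (6 / 5) * (1 - s) ^ 3 * (1 - pFun t) ^ 2 * pFun t ^ 3 * rFun s t

/-! The function `z₀ = (5/6)(1-s)⁵ p⁹ r³` has logarithmic derivative `9 p'/p + 3 r'/r
= -54/p - (69984/25)(1-s)² t²`. On the right-hand side the monomials cancel down to
`5d/(qc) = 36/p`, `3y/q = 18/p` and `9 a z₂/(qc) = (69984/25)(1-s)² t²`, which is exactly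
this logarithmic derivative. -/

lemma one_sub_pFun (t : ℝ) : 1 - pFun t = 6 * t := by
  unfold pFun; ring

lemma pFun_hasDerivAt (t : ℝ) : HasDerivAt pFun (-6) t := by
  show HasDerivAt (fun x : ℝ => 1 - 6 * x) (-6) t
  simpa using ((hasDerivAt_id t).const_mul (6 : ℝ)).const_sub (1 : ℝ)

lemma rFun_ne_zero (s t : ℝ) : rFun s t ≠ 0 :=
  (Real.exp_pos _).ne'

lemma rFun_hasDerivAt (s t : ℝ) :
    HasDerivAt (rFun s) (-(23328 / 25) * (1 - s) ^ 2 * t ^ 2 * rFun s t) t := by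
  have hexponent := (hasDerivAt_pow 3 t).const_mul (-(7776 / 25) * (1 - s) ^ 2)
  refine hexponent.exp.congr_deriv ?_
  simp only [rFun, Nat.cast_ofNat, Nat.add_one_sub_one]
  ring

section

variable {s t : ℝ} (hs0 : s ≠ 0) (hs1 : s ≠ 1) (hp : pFun t ≠ 0)
include hp

lemma z0Fun_hasDerivAt_of_pFun_ne_zero :
    HasDerivAt (z0Fun s) ((-54 / pFun t - (69984 / 25) * (1 - s) ^ 2 * t ^ 2) * z0Fun s t) t := by
  have h := (((pFun_hasDerivAt t).pow 9).mul ((rFun_hasDerivAt s t).pow 3)).const_mul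
    ((5 / 6) * (1 - s) ^ 5)
  have hz0 : z0Fun s = fun x => (5 / 6) * (1 - s) ^ 5 * (pFun ^ 9 * rFun s ^ 3) x := by
    funext x; simp only [z0Fun, Pi.mul_apply, Pi.pow_apply]; ring
  rw [hz0]
  refine h.congr_deriv ?_
  simp only [Pi.mul_apply, Pi.pow_apply, Nat.cast_ofNat, Nat.add_one_sub_one]
  field_simp
  ring

include hs0 hs1

lemma five_dFun_div_add_three_yFun_div :
    5 * dFun s t / (qFun t * cFun s t) + 3 * yFun t / qFun t = 54 / pFun t := by
  have hs1' : 1 - s ≠ 0 := sub_ne_zero.mpr hs1.symm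
  have hr := rFun_ne_zero s t
  simp only [dFun, qFun, cFun, c1Fun, c2Fun, yFun]
  field_simp
  ring

lemma nine_aFun_mul_z2Fun_div :
    9 * aFun s t * z2Fun s t / (qFun t * cFun s t) = (69984 / 25) * (1 - s) ^ 2 * t ^ 2 := by
  have hs1' : 1 - s ≠ 0 := sub_ne_zero.mpr hs1.symm
  have hr := rFun_ne_zero s t
  simp only [aFun, z2Fun, qFun, cFun, c1Fun, c2Fun, one_sub_pFun]
  field_simp
  ring

end

theorem z0_hasDerivAt_general (s : ℝ) (hs0 : 0 < s) (hs1 : s < 1) (t : ℝ)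
    (ht : t < 1 / 6) :
    HasDerivAt (z0Fun s)
      (-(5 * dFun s t * z0Fun s t) / (qFun t * cFun s t)
        - (9 * aFun s t * z2Fun s t * z0Fun s t) / (qFun t * cFun s t)
        - (3 * yFun t * z0Fun s t) / qFun t) t := by
  have hp : pFun t ≠ 0 := by unfold pFun; linarith
  convert z0Fun_hasDerivAt_of_pFun_ne_zero (s := s) hp using 1
  calc _ = -(5 * dFun s t / (qFun t * cFun s t) + 3 * yFun t / qFun t) * z0Fun s t
          - 9 * aFun s t * z2Fun s t / (qFun t * cFun s t) * z0Fun s t := by ring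
    _ = _ := by
      rw [five_dFun_div_add_three_yFun_div hs0.ne' hs1.ne hp,
        nine_aFun_mul_z2Fun_div hs0.ne' hs1.ne hp]
      ring

theorem z0_hasDerivAt (s : ℝ) (hs0 : 0 < s) (hs1 : s < 1) (t : ℝ)
    (ht0 : 0 ≤ t) (ht : t < 1 / 6) :
    HasDerivAt (z0Fun s)
      (-(5 * dFun s t * z0Fun s t) / (qFun t * cFun s t)
        - (9 * aFun s t * z2Fun s t * z0Fun s t) / (qFun t * cFun s t)
        - (3 * yFun t * z0Fun s t) / qFun t) t :=
  z0_hasDerivAt_general s hs0 hs1 t ht
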